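/- arXiv:2406.19606 — 2 statements merged into one kernel-verified Lean document; each statement's English description precedes it below -/
import Mathlib

section
/- There is an absolute constant C such that for all real x ≥ 2, |Σ_{P monic irreducible, |P| ≤ x} (log |P|)/|P| − log x| ≤ C·(1 + log q), where |P| = q^{deg P}. In other words, Σ_{|P| ≤ x} (log|P|)/|P| = log x + O(1). -/
/-!
Factoring `X ^ q ^ n - X`, the product of the distinct monic irreducibles of degree dividing `n`,
gives Gauss's formula `∑_{d ∣ n} d π(d) = q ^ n`, hence `q ^ n - 2 q ^ (n / 2) ≤ n π(n) ≤ q ^ n`.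
Grouping the primes by degree, the sum equals `log q ∑_{n ≤ N} n π(n) / q ^ n` with
`N = ⌊log_q x⌋`; every summand is `1 - O((3 / 4) ^ n)`, so the sum is
`N log q + O(log q) = log x + O(log q)`.
-/

open Polynomial UniqueFactorizationMonoid Finset

theorem Nat.le_div_two_of_mem_properDivisors {n d : ℕ} (h : d ∈ n.properDivisors) :
    d ≤ n / 2 := by
  obtain ⟨⟨k, rfl⟩, hlt⟩ := Nat.mem_properDivisors.mp h
  have hk : 2 ≤ k := by
    by_contra! hk
    interval_cases k <;> simp at hlt
  rw [Nat.le_div_iff_mul_le two_pos]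
  exact Nat.mul_le_mul_left d hk

theorem Nat.geomSum_range_succ_le_two_mul_pow {q : ℕ} (hq : 2 ≤ q) (m : ℕ) :
    ∑ d ∈ range (m + 1), q ^ d ≤ 2 * q ^ m := by
  rw [sum_range_succ, two_mul]
  exact Nat.add_le_add_right (Nat.geomSum_lt hq fun _ => mem_range.mp).le _

theorem Nat.le_log_floor_iff_pow_le {b : ℕ} (hb : 1 < b) {x : ℝ} (hx : 1 ≤ x) (d : ℕ) :
    d ≤ Nat.log b ⌊x⌋₊ ↔ (b : ℝ) ^ d ≤ x := by
  rw [Nat.le_log_iff_pow_le hb (Nat.floor_pos.mpr hx).ne', Nat.le_floor_iff (by linarith),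
    Nat.cast_pow]

theorem Real.log_mem_Ico_natLog_floor_mul_log {b : ℕ} (hb : 1 < b) {x : ℝ} (hx : 1 ≤ x) :
    Real.log x ∈ Set.Ico (Nat.log b ⌊x⌋₊ * Real.log b) ((Nat.log b ⌊x⌋₊ + 1) * Real.log b) := by
  have hb₀ : (0 : ℝ) < b := by positivity
  rw [Set.mem_Ico, ← Nat.cast_succ, ← not_le, ← Real.pow_le_iff_le_log hb₀ (by linarith),
    ← Real.pow_le_iff_le_log hb₀ (by linarith), ← Nat.le_log_floor_iff_pow_le hb hx,
    ← Nat.le_log_floor_iff_pow_le hb hx]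
  exact ⟨le_rfl, Nat.not_succ_le_self _⟩

-- `3 / 4` is a rational stand-in for the true ratio `1 / √2`.
theorem pow_div_two_div_pow_le {q : ℝ} (hq : 2 ≤ q) (n : ℕ) :
    q ^ (n / 2) / q ^ n ≤ (3 / 4) ^ n := by
  have hsplit : q ^ n = q ^ (n / 2) * q ^ (n - n / 2) := by rw [← pow_add]; congr 1; omega
  have hhalf : ((1 : ℝ) / 2) ^ (n - n / 2) ≤ (3 / 4) ^ n := by
    refine le_of_pow_le_pow_left₀ two_ne_zero (by positivity) ?_
    calc (((1 : ℝ) / 2) ^ (n - n / 2)) ^ 2 = (1 / 2) ^ (2 * (n - n / 2)) := by rw [pow_mul']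
      _ ≤ (1 / 2) ^ n := pow_le_pow_of_le_one (by norm_num) (by norm_num) (by omega)
      _ ≤ (9 / 16) ^ n := pow_le_pow_left₀ (by norm_num) (by norm_num) n
      _ = ((3 / 4) ^ n) ^ 2 := by rw [← pow_mul', pow_mul]; norm_num
  calc q ^ (n / 2) / q ^ n = 1 / q ^ (n - n / 2) := by
        rw [hsplit, div_mul_eq_div_div, div_self (by positivity)]
    _ ≤ 1 / 2 ^ (n - n / 2) :=
        one_div_le_one_div_of_le (by positivity) (pow_le_pow_left₀ (by norm_num) hq _)
    _ ≤ (3 / 4) ^ n := by rwa [← one_div_pow]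

namespace FiniteField

variable {F : Type*} [Field F] [Finite F]

-- Empty for `n = 0`, where `X ^ q ^ 0 - X = 0`.
variable (F) in
open Classical in
noncomputable def monicIrreducibleOfDegreeDvd (n : ℕ) : Finset F[X] :=
  (normalizedFactors (X ^ Nat.card F ^ n - X : F[X])).toFinset

variable (F) in
noncomputable def monicIrreducibleOfDegree (d : ℕ) : Finset F[X] :=
  (monicIrreducibleOfDegreeDvd F d).filter (·.natDegree = d)

theorem X_pow_natCard_pow_sub_X_ne_zero {n : ℕ} (hn : n ≠ 0) :
    (X ^ Nat.card F ^ n - X : F[X]) ≠ 0 :=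
  X_pow_card_pow_sub_X_ne_zero F hn Finite.one_lt_card

theorem squarefree_X_pow_natCard_pow_sub_X {n : ℕ} (hn : n ≠ 0) :
    Squarefree (X ^ Nat.card F ^ n - X : F[X]) := by
  refine (galois_poly_separable (ringChar F) _ ?_).squarefree
  have : Fintype F := .ofFinite F
  rw [← ringChar.spec, Nat.cast_pow, ← Fintype.card_eq_nat_card, Nat.cast_card_eq_zero,
    zero_pow hn]

theorem mem_monicIrreducibleOfDegreeDvd {n : ℕ} (hn : n ≠ 0) {P : F[X]} :
    P ∈ monicIrreducibleOfDegreeDvd F n ↔ P.Monic ∧ Irreducible P ∧ P.natDegree ∣ n := by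
  classical
  rw [monicIrreducibleOfDegreeDvd, Multiset.mem_toFinset,
    Polynomial.mem_normalizedFactors_iff (X_pow_natCard_pow_sub_X_ne_zero hn)]
  exact ⟨fun ⟨hi, hm, hdvd⟩ => ⟨hm, hi, hi.natDegree_dvd_of_dvd_X_pow_card_pow_sub_X hdvd⟩,
    fun ⟨hm, hi, hdvd⟩ => ⟨hi, hm, hi.natDegree_dvd_iff_dvd_X_pow_card_pow_sub_X.mp hdvd⟩⟩

theorem mem_monicIrreducibleOfDegree {d : ℕ} {P : F[X]} :
    P ∈ monicIrreducibleOfDegree F d ↔ P.Monic ∧ Irreducible P ∧ P.natDegree = d := by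
  rcases eq_or_ne d 0 with rfl | hd
  · have hempty : monicIrreducibleOfDegreeDvd F 0 = ∅ := by simp [monicIrreducibleOfDegreeDvd]
    rw [monicIrreducibleOfDegree, hempty, filter_empty]
    simpa using fun _ hi => hi.natDegree_pos.ne'
  rw [monicIrreducibleOfDegree, mem_filter, mem_monicIrreducibleOfDegreeDvd hd]
  exact ⟨fun ⟨⟨hm, hi, _⟩, hdeg⟩ => ⟨hm, hi, hdeg⟩,
    fun ⟨hm, hi, hdeg⟩ => ⟨⟨hm, hi, hdeg ▸ dvd_rfl⟩, hdeg⟩⟩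

theorem sum_natDegree_monicIrreducibleOfDegreeDvd {n : ℕ} (hn : n ≠ 0) :
    ∑ P ∈ monicIrreducibleOfDegreeDvd F n, P.natDegree = Nat.card F ^ n := by
  classical
  have hg := X_pow_natCard_pow_sub_X_ne_zero (F := F) hn
  have hnodup := (squarefree_iff_nodup_normalizedFactors hg).mp
    (squarefree_X_pow_natCard_pow_sub_X hn)
  rw [monicIrreducibleOfDegreeDvd, ← Multiset.toFinset_eq hnodup, Finset.sum_mk,
    ← natDegree_multiset_prod _ (zero_notMem_normalizedFactors _), prod_normalizedFactors_eq hg,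
    natDegree_eq_of_degree_eq degree_normalize,
    X_pow_card_pow_sub_X_natDegree_eq F hn Finite.one_lt_card]

theorem sum_divisors_mul_card_monicIrreducibleOfDegree {n : ℕ} (hn : n ≠ 0) :
    ∑ d ∈ n.divisors, d * #(monicIrreducibleOfDegree F d) = Nat.card F ^ n := by
  classical
  have hmaps : ∀ P ∈ monicIrreducibleOfDegreeDvd F n, P.natDegree ∈ n.divisors := fun P hP =>
    Nat.mem_divisors.mpr ⟨((mem_monicIrreducibleOfDegreeDvd hn).mp hP).2.2, hn⟩
  rw [← sum_natDegree_monicIrreducibleOfDegreeDvd hn, ← sum_fiberwise_of_maps_to hmaps]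
  refine sum_congr rfl fun d hd => ?_
  have hfiber : {P ∈ monicIrreducibleOfDegreeDvd F n | P.natDegree = d} =
      monicIrreducibleOfDegree F d := by
    ext P
    rw [mem_filter, mem_monicIrreducibleOfDegreeDvd hn, mem_monicIrreducibleOfDegree]
    exact ⟨fun ⟨⟨hm, hi, _⟩, hdeg⟩ => ⟨hm, hi, hdeg⟩,
      fun ⟨hm, hi, hdeg⟩ => ⟨⟨hm, hi, hdeg ▸ Nat.dvd_of_mem_divisors hd⟩, hdeg⟩⟩
  rw [hfiber, sum_congr rfl fun P hP => (mem_monicIrreducibleOfDegree.mp hP).2.2, sum_const,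
    smul_eq_mul, mul_comm]

theorem mul_card_monicIrreducibleOfDegree_le (n : ℕ) :
    n * #(monicIrreducibleOfDegree F n) ≤ Nat.card F ^ n := by
  rcases eq_or_ne n 0 with rfl | hn
  · simp
  rw [← sum_divisors_mul_card_monicIrreducibleOfDegree hn]
  exact single_le_sum (f := fun d => d * #(monicIrreducibleOfDegree F d))
    (fun _ _ => Nat.zero_le _) (Nat.mem_divisors_self n hn)

theorem pow_le_mul_card_monicIrreducibleOfDegree_add (n : ℕ) :
    Nat.card F ^ n ≤ n * #(monicIrreducibleOfDegree F n) + 2 * Nat.card F ^ (n / 2) := by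
  rcases eq_or_ne n 0 with rfl | hn
  · simp
  have hproper : ∑ d ∈ n.properDivisors, d * #(monicIrreducibleOfDegree F d) ≤
      2 * Nat.card F ^ (n / 2) := calc
    _ ≤ ∑ d ∈ n.properDivisors, Nat.card F ^ d :=
      sum_le_sum fun d _ => mul_card_monicIrreducibleOfDegree_le d
    _ ≤ ∑ d ∈ range (n / 2 + 1), Nat.card F ^ d :=
      sum_le_sum_of_subset fun d hd =>
        mem_range_succ_iff.mpr (Nat.le_div_two_of_mem_properDivisors hd)
    _ ≤ 2 * Nat.card F ^ (n / 2) := Nat.geomSum_range_succ_le_two_mul_pow Finite.one_lt_card _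
  rw [← sum_divisors_mul_card_monicIrreducibleOfDegree hn, ← Nat.cons_self_properDivisors hn,
    sum_cons]
  exact Nat.add_le_add_left hproper _

theorem mul_card_monicIrreducibleOfDegree_div_pow_le_one (n : ℕ) :
    (n * #(monicIrreducibleOfDegree F n) : ℝ) / (Nat.card F : ℝ) ^ n ≤ 1 := by
  rw [div_le_one (by have := Finite.one_lt_card (α := F); positivity)]
  exact_mod_cast mul_card_monicIrreducibleOfDegree_le n

theorem one_sub_mul_card_monicIrreducibleOfDegree_div_pow_le (n : ℕ) :
    1 - (n * #(monicIrreducibleOfDegree F n) : ℝ) / (Nat.card F : ℝ) ^ n ≤ 2 * (3 / 4) ^ n := by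
  have hq : (2 : ℝ) ≤ Nat.card F := by exact_mod_cast Finite.one_lt_card (α := F)
  have hcount : (Nat.card F : ℝ) ^ n ≤
      n * #(monicIrreducibleOfDegree F n) + 2 * (Nat.card F : ℝ) ^ (n / 2) := by
    exact_mod_cast pow_le_mul_card_monicIrreducibleOfDegree_add n
  calc 1 - (n * #(monicIrreducibleOfDegree F n) : ℝ) / (Nat.card F : ℝ) ^ n
      ≤ 2 * ((Nat.card F : ℝ) ^ (n / 2) / (Nat.card F : ℝ) ^ n) := by
        rw [one_sub_div (by positivity), mul_div_assoc',
          div_le_div_iff_of_pos_right (by positivity)]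
        linarith
    _ ≤ 2 * (3 / 4) ^ n := by gcongr; exact pow_div_two_div_pow_le hq n

theorem sum_mul_card_monicIrreducibleOfDegree_div_pow_le (N : ℕ) :
    ∑ n ∈ Icc 1 N, (n * #(monicIrreducibleOfDegree F n) : ℝ) / (Nat.card F : ℝ) ^ n ≤ N := by
  calc _ ≤ ∑ n ∈ Icc 1 N, (1 : ℝ) :=
        sum_le_sum fun n _ => mul_card_monicIrreducibleOfDegree_div_pow_le_one n
    _ = N := by simp

theorem le_sum_mul_card_monicIrreducibleOfDegree_div_pow (N : ℕ) :
    N - 6 ≤ ∑ n ∈ Icc 1 N, (n * #(monicIrreducibleOfDegree F n) : ℝ) / (Nat.card F : ℝ) ^ n := by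
  have hgeom : ∑ n ∈ Icc 1 N, ((3 : ℝ) / 4) ^ n ≤ 3 := by
    rw [← Ico_add_one_right_eq_Icc]
    calc _ ≤ ((3 : ℝ) / 4) ^ 1 / (1 - 3 / 4) :=
          geom_sum_Ico_le_of_lt_one (by norm_num) (by norm_num)
      _ = 3 := by norm_num
  have hdefect : ∑ n ∈ Icc 1 N,
      (1 - (n * #(monicIrreducibleOfDegree F n) : ℝ) / (Nat.card F : ℝ) ^ n) ≤ 6 := calc
    _ ≤ ∑ n ∈ Icc 1 N, 2 * ((3 : ℝ) / 4) ^ n :=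
      sum_le_sum fun n _ => one_sub_mul_card_monicIrreducibleOfDegree_div_pow_le n
    _ ≤ 6 := by rw [← mul_sum]; linarith
  rw [sum_sub_distrib] at hdefect
  simp only [sum_const, Nat.card_Icc, add_tsub_cancel_right, nsmul_eq_mul, mul_one] at hdefect
  linarith

theorem tsum_monicIrreducible_pow_natDegree_le (f : ℕ → ℝ) {x : ℝ} (hx : 1 ≤ x) :
    ∑' P : {P : F[X] // P.Monic ∧ Irreducible P ∧ (Nat.card F : ℝ) ^ P.natDegree ≤ x},
        f P.1.natDegree =
      ∑ n ∈ Icc 1 (Nat.log (Nat.card F) ⌊x⌋₊), #(monicIrreducibleOfDegree F n) * f n := by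
  classical
  have hq : 1 < Nat.card F := Finite.one_lt_card
  have hmem : ∀ P : F[X], P.Monic ∧ Irreducible P ∧ (Nat.card F : ℝ) ^ P.natDegree ≤ x ↔
      P ∈ (Icc 1 (Nat.log (Nat.card F) ⌊x⌋₊)).biUnion (monicIrreducibleOfDegree F) := fun P => by
    simp only [mem_biUnion, mem_Icc, mem_monicIrreducibleOfDegree,
      Nat.le_log_floor_iff_pow_le hq hx]
    exact ⟨fun ⟨hm, hi, hle⟩ => ⟨_, ⟨hi.natDegree_pos, hle⟩, hm, hi, rfl⟩,
      fun ⟨_, ⟨_, hle⟩, hm, hi, hdeg⟩ => ⟨hm, hi, hdeg ▸ hle⟩⟩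
  have hdisj : (Icc 1 (Nat.log (Nat.card F) ⌊x⌋₊) : Set ℕ).PairwiseDisjoint
      (monicIrreducibleOfDegree F) :=
    fun a _ b _ hab => disjoint_left.mpr fun P ha hb => hab <|
      (mem_monicIrreducibleOfDegree.mp ha).2.2.symm.trans (mem_monicIrreducibleOfDegree.mp hb).2.2
  have hfiber : ∀ n ∈ Icc 1 (Nat.log (Nat.card F) ⌊x⌋₊),
      #(monicIrreducibleOfDegree F n) * f n = ∑ P ∈ monicIrreducibleOfDegree F n, f P.natDegree :=
    fun n _ => by
      rw [sum_congr rfl fun P hP => congrArg f (mem_monicIrreducibleOfDegree.mp hP).2.2,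
        sum_const, nsmul_eq_mul]
  rw [sum_congr rfl hfiber, ← sum_biUnion hdisj, ← Finset.tsum_subtype]
  exact (Equiv.subtypeEquivRight hmem).tsum_eq fun P => f P.1.natDegree

end FiniteField

/-- Mertens' first theorem for `𝔽_q[T]`: there is an absolute constant `C` such that for
all finite fields `𝔽_q` and all `x ≥ 2`,
`|∑_{P monic irreducible, |P| ≤ x} log|P|/|P| - log x| ≤ C (1 + log q)`. -/
theorem mertensFirst_functionField :
    ∃ C : ℝ, 0 < C ∧ ∀ (F : Type) [Field F] [Fintype F] (x : ℝ), 2 ≤ x →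
      |(∑' P : {P : Polynomial F // P.Monic ∧ Irreducible P ∧
            (Fintype.card F : ℝ) ^ P.natDegree ≤ x},
          Real.log ((Fintype.card F : ℝ) ^ P.1.natDegree)
            / (Fintype.card F : ℝ) ^ P.1.natDegree) - Real.log x|
        ≤ C * (1 + Real.log (Fintype.card F)) := by
  refine ⟨7, by norm_num, fun F _ _ x hx => ?_⟩
  rw [Fintype.card_eq_nat_card]
  have hq : 1 < Nat.card F := Finite.one_lt_card
  have hlogq : 0 < Real.log (Nat.card F) := Real.log_pos (by exact_mod_cast hq)
  set N := Nat.log (Nat.card F) ⌊x⌋₊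
  have hsum : ∑' P : {P : F[X] // P.Monic ∧ Irreducible P ∧ (Nat.card F : ℝ) ^ P.natDegree ≤ x},
      Real.log ((Nat.card F : ℝ) ^ P.1.natDegree) / (Nat.card F : ℝ) ^ P.1.natDegree =
      Real.log (Nat.card F) * ∑ n ∈ Icc 1 N,
        (n * #(FiniteField.monicIrreducibleOfDegree F n) : ℝ) / (Nat.card F : ℝ) ^ n := by
    refine (FiniteField.tsum_monicIrreducible_pow_natDegree_le
      (fun n => Real.log ((Nat.card F : ℝ) ^ n) / (Nat.card F : ℝ) ^ n) (by linarith)).trans ?_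
    rw [mul_sum]
    exact sum_congr rfl fun n _ => by rw [Real.log_pow]; ring
  obtain ⟨hlogx_lower, hlogx_upper⟩ :=
    Real.log_mem_Ico_natLog_floor_mul_log hq (by linarith : 1 ≤ x)
  have hupper := mul_le_mul_of_nonneg_left
    (FiniteField.sum_mul_card_monicIrreducibleOfDegree_div_pow_le (F := F) N) hlogq.le
  have hlower := mul_le_mul_of_nonneg_left
    (FiniteField.le_sum_mul_card_monicIrreducibleOfDegree_div_pow (F := F) N) hlogq.le
  rw [hsum, abs_le]
  constructor <;> linarith
end

section
/- Let h ≥ 1 be a real number and θ a real number, and define F(h, θ) = Σ_{1 ≤ n ≤ h} cos(nθ)/n. Then F(h, θ) = log min(h, 1/θ̄) + O(1), where θ̄ = min_{n ∈ Z} |θ − 2πn| (with the convention that min(h, 1/0) = h), and the implied constant is absolute. -/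
open Real Finset

private lemma abs_cos_sub_one_le' (x : ℝ) : |Real.cos x - 1| ≤ x^2 / 2 := by
  rw [abs_le]
  constructor
  · nlinarith [Real.one_sub_sq_div_two_le_cos (x := x)]
  · nlinarith [Real.cos_le_one x, sq_nonneg x]

private lemma tele_Ioc (f : ℕ → ℝ) (m : ℕ) : ∀ n, m ≤ n →
    ∑ i ∈ Finset.Ioc m n, (f i - f (i+1)) = f (m+1) - f (n+1) := by
  intro n
  induction n with
  | zero => intro h; interval_cases m; simp
  | succ n ih =>
    intro h
    rcases Nat.lt_or_ge m (n+1) with h' | h'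
    · have hmn : m ≤ n := Nat.lt_succ_iff.mp h'
      rw [Finset.sum_Ioc_succ_top hmn, ih hmn]; ring
    · have : m = n+1 := le_antisymm h h'
      subst this; simp

private lemma cos_sum_range_bound {δ : ℝ} (hs : 0 < Real.sin (δ/2)) (k : ℕ) :
    |∑ j ∈ Finset.range k, Real.cos (j * δ)| ≤ 1 / Real.sin (δ/2) := by
  have key : (2 * Real.sin (δ/2)) * ∑ j ∈ Finset.range k, Real.cos (j * δ)
      = Real.sin ((k:ℝ) * δ - δ/2) - Real.sin ((0:ℝ) * δ - δ/2) := by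
    have tele := Finset.sum_range_sub (fun j : ℕ => Real.sin (j * δ - δ/2)) k
    rw [Finset.mul_sum]
    rw [show ((0:ℝ) * δ - δ/2) = ((0:ℕ):ℝ) * δ - δ/2 by norm_num]
    rw [← tele]
    refine Finset.sum_congr rfl fun j _ => ?_
    rw [Real.sin_sub_sin]
    push_cast
    rw [show (((j:ℝ)+1) * δ - δ/2 - ((j:ℝ) * δ - δ/2))/2 = δ/2 by ring,
        show (((j:ℝ)+1) * δ - δ/2 + ((j:ℝ) * δ - δ/2))/2 = (j:ℝ) * δ by ring]
  have h2 : |(2 * Real.sin (δ/2)) * ∑ j ∈ Finset.range k, Real.cos (j * δ)| ≤ 2 := by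
    rw [key, abs_le]
    constructor
    all_goals nlinarith [Real.sin_le_one ((k:ℝ) * δ - δ/2), Real.neg_one_le_sin ((0:ℝ) * δ - δ/2),
      Real.neg_one_le_sin ((k:ℝ) * δ - δ/2), Real.sin_le_one ((0:ℝ) * δ - δ/2)]
  rw [abs_mul, abs_of_pos (by positivity)] at h2
  rw [le_div_iff₀ hs]
  nlinarith [abs_nonneg (∑ j ∈ Finset.range k, Real.cos (j * δ))]

private lemma tail_bound0 {δ : ℝ} (hs : 0 < Real.sin (δ/2)) {M N : ℕ} (hMN : M ≤ N)
    (hG : ∀ k : ℕ, |∑ j ∈ Finset.range k, Real.cos (j * δ)| ≤ 1 / Real.sin (δ/2)) :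
    |∑ n ∈ Finset.Ioc M N, Real.cos (n * δ) / n| ≤ 3 * (1 / Real.sin (δ/2)) / ((M:ℝ)+1) := by
  set K := 1 / Real.sin (δ/2) with hK
  have hK0 : 0 ≤ K := by positivity
  rcases eq_or_lt_of_le hMN with rfl | hlt
  · simp only [Finset.Ioc_self, Finset.sum_empty, abs_zero]
    positivity
  · have habel := Finset.sum_Ioc_by_parts (fun i : ℕ => (i:ℝ)⁻¹)
      (fun i : ℕ => Real.cos (i * δ)) hlt
    simp only [smul_eq_mul] at habel
    have hrw : ∑ n ∈ Finset.Ioc M N, Real.cos (n * δ) / n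
        = ∑ n ∈ Finset.Ioc M N, (n:ℝ)⁻¹ * Real.cos (n * δ) :=
      Finset.sum_congr rfl fun n _ => (div_eq_inv_mul _ _)
    set G : ℕ → ℝ := fun k => ∑ j ∈ Finset.range k, Real.cos ((j:ℝ) * δ) with hGdef
    rw [hrw, habel]
    have hMN' : (M:ℝ) + 1 ≤ (N:ℝ) := by exact_mod_cast hlt
    have hMpos : (0:ℝ) < (M:ℝ) + 1 := by positivity
    have hNpos : (0:ℝ) < (N:ℝ) := by linarith
    have t1 : |(N:ℝ)⁻¹ * G (N+1)| ≤ ((M:ℝ)+1)⁻¹ * K := by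
      rw [abs_mul, abs_of_nonneg (by positivity : (0:ℝ) ≤ (N:ℝ)⁻¹)]
      exact mul_le_mul (inv_anti₀ hMpos hMN') (hG _) (abs_nonneg _) (by positivity)
    have t2 : |((M+1:ℕ):ℝ)⁻¹ * G (M+1)| ≤ ((M:ℝ)+1)⁻¹ * K := by
      rw [abs_mul, abs_of_nonneg (by positivity : (0:ℝ) ≤ ((M+1:ℕ):ℝ)⁻¹)]
      push_cast
      exact mul_le_mul le_rfl (hG _) (abs_nonneg _) (by positivity)
    have t3 : |∑ i ∈ Finset.Ioc M (N-1), (((i+1:ℕ):ℝ)⁻¹ - (i:ℝ)⁻¹) * G (i+1)|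
        ≤ (((M:ℝ)+1)⁻¹ - (N:ℝ)⁻¹) * K := by
      calc |∑ i ∈ Finset.Ioc M (N-1), (((i+1:ℕ):ℝ)⁻¹ - (i:ℝ)⁻¹) * G (i+1)|
          ≤ ∑ i ∈ Finset.Ioc M (N-1), |(((i+1:ℕ):ℝ)⁻¹ - (i:ℝ)⁻¹) * G (i+1)| :=
            Finset.abs_sum_le_sum_abs _ _
        _ ≤ ∑ i ∈ Finset.Ioc M (N-1), ((i:ℝ)⁻¹ - ((i+1:ℕ):ℝ)⁻¹) * K := by
            refine Finset.sum_le_sum fun i hi => ?_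
            have hi1 : (0:ℝ) < (i:ℝ) := by
              have h' := (Finset.mem_Ioc.mp hi).1
              exact_mod_cast (show 0 < i by omega)
            have hmono : ((i+1:ℕ):ℝ)⁻¹ ≤ (i:ℝ)⁻¹ := by
              apply inv_anti₀ hi1; push_cast; linarith
            rw [abs_mul, abs_sub_comm, abs_of_nonneg (by linarith)]
            exact mul_le_mul le_rfl (hG _) (abs_nonneg _) (by linarith)
        _ = (((M+1:ℕ):ℝ)⁻¹ - (((N-1)+1:ℕ):ℝ)⁻¹) * K := by
            rw [← Finset.sum_mul, tele_Ioc (fun i : ℕ => (i:ℝ)⁻¹) M (N-1) (by omega)]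
        _ = (((M:ℝ)+1)⁻¹ - (N:ℝ)⁻¹) * K := by
            have : N - 1 + 1 = N := by omega
            rw [this]; push_cast; ring
    have habs3 : ∀ a b c : ℝ, |a - b - c| ≤ |a| + |b| + |c| := by
      intro a b c
      have h1 : |a - b - c| ≤ |a - b| + |c| := by
        rw [sub_eq_add_neg (a - b) c]
        exact (abs_add_le _ _).trans (by rw [abs_neg])
      have h2 : |a - b| ≤ |a| + |b| := by
        rw [sub_eq_add_neg a b]
        exact (abs_add_le _ _).trans (by rw [abs_neg])
      linarith
    have hfinal := habs3 ((N:ℝ)⁻¹ * G (N+1)) (((M+1:ℕ):ℝ)⁻¹ * G (M+1))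
      (∑ i ∈ Finset.Ioc M (N-1), (((i+1:ℕ):ℝ)⁻¹ - (i:ℝ)⁻¹) * G (i+1))
    have hNinv : (0:ℝ) ≤ (N:ℝ)⁻¹ := by positivity
    have heq : 3 * K / ((M:ℝ)+1) = 3 * (((M:ℝ)+1)⁻¹ * K) := by
      field_simp
    calc |(N:ℝ)⁻¹ * G (N+1) - ((M+1:ℕ):ℝ)⁻¹ * G (M+1)
          - ∑ i ∈ Finset.Ioc M (N-1), (((i+1:ℕ):ℝ)⁻¹ - (i:ℝ)⁻¹) * G (i+1)|
        ≤ |(N:ℝ)⁻¹ * G (N+1)| + |((M+1:ℕ):ℝ)⁻¹ * G (M+1)|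
          + |∑ i ∈ Finset.Ioc M (N-1), (((i+1:ℕ):ℝ)⁻¹ - (i:ℝ)⁻¹) * G (i+1)| := hfinal
      _ ≤ 3 * K / ((M:ℝ)+1) := by
          rw [heq]
          nlinarith [t1, t2, t3, mul_nonneg hNinv hK0]

private lemma head_bound {δ : ℝ} (hδ : 0 ≤ δ) {M : ℕ} (hM : (M:ℝ) * δ ≤ 1) :
    |∑ n ∈ Finset.Icc 1 M, (Real.cos (n * δ) / n - (n:ℝ)⁻¹)| ≤ 1/2 := by
  calc |∑ n ∈ Finset.Icc 1 M, (Real.cos (n * δ) / n - (n:ℝ)⁻¹)|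
      ≤ ∑ n ∈ Finset.Icc 1 M, |Real.cos (n * δ) / n - (n:ℝ)⁻¹| :=
        Finset.abs_sum_le_sum_abs _ _
    _ ≤ ∑ n ∈ Finset.Icc 1 M, (M:ℝ) * δ^2 / 2 := by
        refine Finset.sum_le_sum fun n hn => ?_
        obtain ⟨hn1, hnM⟩ := Finset.mem_Icc.mp hn
        have hn0 : (0:ℝ) < (n:ℝ) := by exact_mod_cast (show 0 < n by omega)
        have hnMr : (n:ℝ) ≤ (M:ℝ) := by exact_mod_cast hnM
        have e1 : Real.cos (n * δ) / n - (n:ℝ)⁻¹ = (Real.cos (n * δ) - 1) / n := by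
          field_simp
        rw [e1, abs_div, abs_of_pos hn0]
        rw [div_le_iff₀ hn0]
        calc |Real.cos (n * δ) - 1| ≤ ((n:ℝ) * δ)^2 / 2 := abs_cos_sub_one_le' _
          _ ≤ (M:ℝ) * δ^2 / 2 * n := by nlinarith
    _ = (M:ℝ) * ((M:ℝ) * δ^2 / 2) := by
        rw [Finset.sum_const, Nat.card_Icc]
        simp only [nsmul_eq_mul]
        push_cast [Nat.add_sub_cancel]
        ring
    _ ≤ 1/2 := by nlinarith [mul_nonneg (Nat.cast_nonneg (α := ℝ) M) hδ]

private lemma harmonic_bounds (M : ℕ) :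
    Real.log ((M:ℝ)+1) ≤ ∑ n ∈ Finset.Icc 1 M, (n:ℝ)⁻¹ ∧
    ∑ n ∈ Finset.Icc 1 M, (n:ℝ)⁻¹ ≤ 1 + Real.log (M:ℝ) := by
  have hc : ((harmonic M : ℚ) : ℝ) = ∑ n ∈ Finset.Icc 1 M, (n:ℝ)⁻¹ := by
    rw [harmonic_eq_sum_Icc]
    push_cast
    rfl
  have h1 := log_add_one_le_harmonic M
  have h2 := harmonic_le_one_add_log M
  push_cast at h1 h2
  constructor
  · rw [← hc]; exact h1
  · rw [← hc]; exact h2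

/-- For `h ≥ 1` and real `θ`, `F(h,θ) = ∑_{1 ≤ n ≤ h} cos(nθ)/n` satisfies
`F(h,θ) = log min(h, 1/θ̄) + O(1)` with an absolute implied constant, where
`θ̄ = min_{n ∈ ℤ} |θ - 2πn|` and `min(h, 1/θ̄)` is interpreted as `h` when `θ̄ = 0`. -/
theorem cosSum_asymptotic :
    ∃ C : ℝ, ∀ (h θ : ℝ), 1 ≤ h →
      |(∑ n ∈ Finset.Icc 1 ⌊h⌋₊, Real.cos (n * θ) / n)
        - Real.log (if (⨅ n : ℤ, |θ - 2 * Real.pi * n|) = 0 then h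
            else min h (1 / ⨅ n : ℤ, |θ - 2 * Real.pi * n|))| ≤ C := by
  use 20
  intro h θ hh
  have hπ := Real.pi_pos
  have hπ315 : π < 3.15 := Real.pi_lt_d2
  have hp : (0:ℝ) < 2 * π := by positivity
  set b := toIocMod hp (-π) θ with hbdef
  obtain ⟨hb1, hb2⟩ := toIocMod_mem_Ioc hp (-π) θ
  have hb2' : b ≤ π := by rw [← hbdef] at hb2; linarith
  rw [← hbdef] at hb1
  set δ := |b| with hδdef
  have hδ0 : 0 ≤ δ := abs_nonneg b
  have hδπ : δ ≤ π := abs_le.mpr ⟨by linarith, hb2'⟩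
  set m := toIocDiv hp (-π) θ with hmdef
  have hθeq : θ = b + (m:ℝ) * (2 * π) := by
    have h' := self_sub_toIocMod hp (-π) θ
    rw [zsmul_eq_mul] at h'
    rw [← hbdef, ← hmdef] at h'
    linarith
  -- identify the infimum
  have hinf : (⨅ n : ℤ, |θ - 2 * π * n|) = δ := by
    apply le_antisymm
    · have hbb : BddBelow (Set.range fun n : ℤ => |θ - 2 * π * n|) :=
        ⟨0, by rintro x ⟨n, rfl⟩; exact abs_nonneg _⟩
      have e : |θ - 2 * π * (m:ℝ)| = δ := by
        rw [show θ - 2 * π * (m:ℝ) = b by rw [hθeq]; ring]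
      calc (⨅ n : ℤ, |θ - 2 * π * n|) ≤ |θ - 2 * π * (m:ℝ)| := ciInf_le hbb m
        _ = δ := e
    · apply le_ciInf
      intro n
      rcases eq_or_ne m n with rfl | hne
      · rw [show θ - 2 * π * (m:ℝ) = b by rw [hθeq]; ring]
      · have hk : θ - 2 * π * (n:ℝ) = b + ((m - n : ℤ):ℝ) * (2 * π) := by
          rw [hθeq]; push_cast; ring
        have h1 : (1:ℝ) ≤ |((m - n : ℤ):ℝ)| := by
          rw [← Int.cast_abs]
          exact_mod_cast Int.one_le_abs (sub_ne_zero.mpr hne)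
        have h2 : 2 * π ≤ |((m - n : ℤ):ℝ) * (2 * π)| := by
          rw [abs_mul, abs_of_pos hp]
          nlinarith
        have h3 := abs_add_le (b + ((m - n : ℤ):ℝ) * (2 * π)) (-b)
        rw [abs_neg, show b + ((m - n : ℤ):ℝ) * (2 * π) + -b = ((m - n : ℤ):ℝ) * (2 * π) by ring]
          at h3
        rw [hk]
        linarith
  rw [hinf]
  -- replace cos (n θ) by cos (n δ)
  have hcos : ∀ n : ℕ, Real.cos (n * θ) = Real.cos (n * δ) := by
    intro n
    have e1 : (n:ℝ) * θ = (n:ℝ) * b + ((n * m : ℤ):ℝ) * (2 * π) := by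
      rw [hθeq]; push_cast; ring
    rw [e1, Real.cos_add_int_mul_two_pi]
    have e2 : (n:ℝ) * δ = |(n:ℝ) * b| := by
      rw [hδdef, abs_mul, Nat.abs_cast]
    rw [e2, Real.cos_abs]
  have hS : (∑ n ∈ Finset.Icc 1 ⌊h⌋₊, Real.cos (n * θ) / n)
      = ∑ n ∈ Finset.Icc 1 ⌊h⌋₊, Real.cos (n * δ) / n :=
    Finset.sum_congr rfl fun n _ => by rw [hcos n]
  rw [hS]
  set N := ⌊h⌋₊ with hNdef
  have hh0 : (0:ℝ) < h := by linarith
  have hN1 : 1 ≤ N := Nat.le_floor (by exact_mod_cast hh)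
  have hNle : (N:ℝ) ≤ h := Nat.floor_le hh0.le
  have hNpos : (0:ℝ) < (N:ℝ) := by exact_mod_cast hN1
  have hhlt : h < (N:ℝ) + 1 := Nat.lt_floor_add_one h
  by_cases h0 : δ = 0
  · rw [if_pos h0]
    have hSe : (∑ n ∈ Finset.Icc 1 N, Real.cos (n * δ) / n) = ∑ n ∈ Finset.Icc 1 N, (n:ℝ)⁻¹ := by
      refine Finset.sum_congr rfl fun n _ => ?_
      rw [h0, mul_zero, Real.cos_zero, one_div]
    rw [hSe]
    obtain ⟨hc1, hc2⟩ := harmonic_bounds N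
    have l1 : Real.log h ≤ Real.log ((N:ℝ)+1) := Real.log_le_log hh0 hhlt.le
    have l2 : Real.log (N:ℝ) ≤ Real.log h := Real.log_le_log hNpos hNle
    rw [abs_le]
    constructor <;> linarith
  · rw [if_neg h0]
    have hδpos : 0 < δ := hδ0.lt_of_ne (Ne.symm h0)
    by_cases hA : h ≤ 1/δ
    · rw [min_eq_left hA]
      have hNδ : (N:ℝ) * δ ≤ 1 := by
        have hhδ : h * δ ≤ 1 := by
          rw [le_div_iff₀ hδpos] at hA; linarith
        nlinarith
      have hhead := head_bound hδ0 hNδ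
      rw [Finset.sum_sub_distrib] at hhead
      obtain ⟨hc1, hc2⟩ := harmonic_bounds N
      have l1 : Real.log h ≤ Real.log ((N:ℝ)+1) := Real.log_le_log hh0 hhlt.le
      have l2 : Real.log (N:ℝ) ≤ Real.log h := Real.log_le_log hNpos hNle
      rw [abs_le] at hhead ⊢
      constructor <;> linarith [hhead.1, hhead.2]
    · push_neg at hA
      rw [min_eq_right hA.le]
      set M := ⌊1/δ⌋₊ with hMdef
      have h1δpos : 0 < 1/δ := by positivity
      have hMle : (M:ℝ) ≤ 1/δ := Nat.floor_le h1δpos.le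
      have hMlt : 1/δ < (M:ℝ) + 1 := Nat.lt_floor_add_one _
      have hMN : M ≤ N := Nat.floor_le_floor hA.le
      have hMδ : (M:ℝ) * δ ≤ 1 := by
        rw [le_div_iff₀ hδpos] at hMle; linarith
      have eIcc : ∀ K : ℕ, Finset.Icc 1 K = Finset.Ioc 0 K := fun K => by
        ext x; simp only [Finset.mem_Icc, Finset.mem_Ioc]; omega
      have hsplit : ∑ n ∈ Finset.Icc 1 N, Real.cos (n * δ) / n
          = (∑ n ∈ Finset.Icc 1 M, Real.cos (n * δ) / n)
            + ∑ n ∈ Finset.Ioc M N, Real.cos (n * δ) / n := by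
        rw [eIcc N, eIcc M, ← Finset.sum_Ioc_consecutive _ (Nat.zero_le M) hMN]
      have hhead := head_bound hδ0 hMδ
      rw [Finset.sum_sub_distrib] at hhead
      obtain ⟨hc1, hc2⟩ := harmonic_bounds M
      have hlog1δ : |(∑ n ∈ Finset.Icc 1 M, (n:ℝ)⁻¹) - Real.log (1/δ)| ≤ 3 := by
        rcases Nat.eq_zero_or_pos M with hM0 | hM1
        · have hempty : Finset.Icc 1 M = (∅ : Finset ℕ) := by
            rw [hM0]; exact Finset.Icc_eq_empty (by omega)
          rw [hempty, Finset.sum_empty]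
          have hlt1 : 1/δ < 1 := by
            rw [hM0] at hMlt; push_cast at hMlt; linarith
          have hle0 : Real.log (1/δ) ≤ 0 := Real.log_nonpos h1δpos.le hlt1.le
          have hge : Real.log (1/π) ≤ Real.log (1/δ) :=
            Real.log_le_log (by positivity) (one_div_le_one_div_of_le hδpos hδπ)
          rw [one_div, Real.log_inv] at hge
          have hlogπ : Real.log π ≤ π - 1 := Real.log_le_sub_one_of_pos hπ
          rw [abs_le]
          constructor <;> linarith
        · have hMr : (1:ℝ) ≤ (M:ℝ) := by exact_mod_cast hM1
          have l1 : Real.log (1/δ) ≤ Real.log ((M:ℝ)+1) := Real.log_le_log h1δpos hMlt.le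
          have l2 : Real.log (M:ℝ) ≤ Real.log (1/δ) := Real.log_le_log (by linarith) hMle
          rw [abs_le]
          constructor <;> linarith
      have hsin : δ/π ≤ Real.sin (δ/2) := by
        have hms := Real.mul_le_sin (x := δ/2) (by positivity) (by linarith)
        calc δ/π = 2/π * (δ/2) := by ring
          _ ≤ Real.sin (δ/2) := hms
      have hspos : 0 < Real.sin (δ/2) := lt_of_lt_of_le (by positivity) hsin
      have htail := tail_bound0 hspos hMN (cos_sum_range_bound hspos)
      have e1 : 1/Real.sin (δ/2) ≤ π/δ := by
        rw [div_le_div_iff₀ hspos hδpos]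
        have hm := mul_le_mul_of_nonneg_left hsin hπ.le
        have hππ : π * (δ/π) = δ := by field_simp
        linarith
      have e2 : 1/((M:ℝ)+1) ≤ δ := by
        rw [div_le_iff₀ (by positivity)]
        rw [div_lt_iff₀ hδpos] at hMlt
        linarith
      have htail' : |∑ n ∈ Finset.Ioc M N, Real.cos (n * δ) / n| ≤ 3 * π := by
        refine htail.trans ?_
        have h3 : 3 * (1/Real.sin (δ/2)) / ((M:ℝ)+1)
            = 3 * ((1/Real.sin (δ/2)) * (1/((M:ℝ)+1))) := by ring
        rw [h3]
        have hmm := mul_le_mul e1 e2 (by positivity) (by positivity)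
        have hpd : (π/δ) * δ = π := div_mul_cancel₀ _ (ne_of_gt hδpos)
        linarith
      rw [hsplit]
      rw [abs_le] at hhead hlog1δ htail' ⊢
      constructor <;>
        linarith [hhead.1, hhead.2, hlog1δ.1, hlog1δ.2, htail'.1, htail'.2]
end
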